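/- arXiv:math/9611201 — 2 statements merged into one kernel-verified Lean document; each statement's English description precedes it below -/
import Mathlib

section
/- For each natural number n \ge 1 there is a constant R > 0 such that for every natural number k and every polynomial p(t) = \sum_{|\alpha| \le k} c_\alpha t^\alpha on \mathbb{R}^n of total degree at most k with complex coefficients, one has \max_\alpha |c_\alpha| \le R^k \cdot \sup\{|p(t)| : t \in \mathbb{R}^n, |t_1| \le 1, \dots, |t_n| \le 1\}. -/
/-!
Interpolate `p` on the grid `{0, 1/k, …, 1}ⁿ`. Since `p` has degree `≤ k` in each variable,
tensor-product Lagrange interpolation expresses `c_α` as `∑ₓ (∏ᵢ [t^{αᵢ}] ℓ_{xᵢ}) p(x)`, so it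
suffices to bound the coefficients of the one-variable Lagrange basis polynomials
`ℓ_j = w_j ∏_{i ≠ j} (t - i/k)`. The product has all its roots in the unit disc, hence
coefficients at most `2^k`, and the weight satisfies
`|w_j| = k^k / (j! (k-j)!) ≤ 2^k k^k / k! ≤ (2e)^k`.
Summing over the `(k+1)^n ≤ 2^{kn}` grid points gives `R = (8e)^n`.
-/

open Finset Polynomial
open scoped Nat

namespace Lagrange

variable {F ι : Type*} {s : Finset ι} {v : ι → F}

theorem norm_coeff_nodal_le [NormedField F] (hv : ∀ i ∈ s, ‖v i‖ ≤ 1) (m : ℕ) :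
    ‖(nodal s v).coeff m‖ ≤ 2 ^ #s := by
  have hroots : ∀ z ∈ ((nodal s v).map (RingHom.id F)).roots, ‖z‖ ≤ 1 := by
    intro z hz
    rw [map_id, mem_roots nodal_ne_zero, IsRoot, eval_nodal, prod_eq_zero_iff] at hz
    obtain ⟨i, hi, hzi⟩ := hz
    rw [sub_eq_zero.mp hzi]
    exact hv i hi
  have hsplit : ((nodal s v).map (RingHom.id F)).Splits := by
    rw [map_id, nodal_eq]
    exact Splits.prod fun i _ => Splits.X_sub_C (v i)
  calc ‖(nodal s v).coeff m‖ ≤ 1 ^ (#s - m) * ((#s).choose m : ℝ) := by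
        simpa [natDegree_nodal] using coeff_le_of_roots_le m nodal_monic hsplit hroots
    _ ≤ 2 ^ #s := by
        rw [one_pow, one_mul]
        exact_mod_cast Nat.choose_le_two_pow _ _

theorem norm_coeff_basis_le [NormedField F] [DecidableEq ι] (hv : ∀ i ∈ s, ‖v i‖ ≤ 1)
    (j : ι) (m : ℕ) :
    ‖(Lagrange.basis s v j).coeff m‖ ≤ ‖nodalWeight s v j‖ * 2 ^ #(s.erase j) := by
  have h : Lagrange.basis s v j = C (nodalWeight s v j) * nodal (s.erase j) v := by
    simp_rw [Lagrange.basis, basisDivisor, nodalWeight, prod_mul_distrib, map_prod, nodal]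
  rw [h, coeff_C_mul, norm_mul]
  gcongr
  exact norm_coeff_nodal_le (fun i hi => hv i (mem_of_mem_erase hi)) m

theorem sum_coeff_basis_mul_pow [Field F] [DecidableEq ι] (hvs : Set.InjOn v s) {b : ℕ}
    (hb : b < #s) (m : ℕ) :
    ∑ j ∈ s, (Lagrange.basis s v j).coeff m * v j ^ b = if m = b then 1 else 0 := by
  have h := congrArg (coeff · m) (eq_interpolate (f := X ^ b) hvs (by simpa using hb))
  simp only [interpolate_apply, finsetSum_coeff, coeff_C_mul, eval_pow, eval_X, coeff_X_pow] at h
  simp_rw [h, mul_comm]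

end Lagrange

namespace MvPolynomial

variable {F ι σ : Type*} [DecidableEq ι] [Fintype σ] [DecidableEq σ]
  {s : Finset ι} {v : ι → F}

theorem coeff_eq_sum_basis_mul_eval [Field F] (hvs : Set.InjOn v s) {p : MvPolynomial σ F}
    (hp : ∀ i, p.degreeOf i < #s) (α : σ →₀ ℕ) :
    p.coeff α = ∑ x ∈ Fintype.piFinset fun _ => s,
      (∏ i, (Lagrange.basis s v (x i)).coeff (α i)) * eval (fun i => v (x i)) p := by
  have hmonomial : ∀ β ∈ p.support, ∑ x ∈ Fintype.piFinset fun _ => s,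
      (∏ i, (Lagrange.basis s v (x i)).coeff (α i)) * ∏ i, v (x i) ^ β i =
        if α = β then 1 else 0 := by
    intro β hβ
    simp_rw [← prod_mul_distrib]
    rw [← prod_univ_sum (fun _ => s) fun i j =>
      (Lagrange.basis s v j).coeff (α i) * v j ^ β i]
    simp_rw [Lagrange.sum_coeff_basis_mul_pow hvs ((monomial_le_degreeOf _ hβ).trans_lt (hp _)),
      Fintype.prod_boole, ← Finsupp.ext_iff]
  simp_rw [eval_eq', mul_sum]
  rw [sum_comm]
  simp_rw [mul_left_comm _ (p.coeff _), ← mul_sum]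
  rw [sum_congr rfl fun β hβ => congrArg (p.coeff β * ·) (hmonomial β hβ)]
  simp_rw [mul_boole]
  rw [sum_ite_eq, eq_comm, ite_eq_left_iff, notMem_support_iff]
  exact Eq.symm

theorem norm_coeff_le_of_norm_eval_le [NormedField F] (hvs : Set.InjOn v s) {p : MvPolynomial σ F}
    (hp : ∀ i, p.degreeOf i < #s) {B M : ℝ}
    (hB : ∀ j ∈ s, ∀ m, ‖(Lagrange.basis s v j).coeff m‖ ≤ B)
    (hM : ∀ x ∈ Fintype.piFinset fun _ => s, ‖eval (fun i => v (x i)) p‖ ≤ M) (hM0 : 0 ≤ M)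
    (α : σ →₀ ℕ) : ‖p.coeff α‖ ≤ (#s * B) ^ Fintype.card σ * M := by
  rw [coeff_eq_sum_basis_mul_eval hvs hp α]
  calc _ ≤ ∑ x ∈ Fintype.piFinset fun _ => s,
        (∏ i, ‖(Lagrange.basis s v (x i)).coeff (α i)‖) * M := by
        refine (norm_sum_le _ _).trans (sum_le_sum fun x hx => ?_)
        rw [norm_mul, norm_prod]
        gcongr
        exact hM x hx
    _ = (∏ i, ∑ j ∈ s, ‖(Lagrange.basis s v j).coeff (α i)‖) * M := by
        rw [← sum_mul, prod_univ_sum]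
    _ ≤ (#s * B) ^ Fintype.card σ * M := by
        gcongr
        rw [← card_univ, ← prod_const]
        refine prod_le_prod (fun _ _ => sum_nonneg fun _ _ => norm_nonneg _) fun i _ => ?_
        exact (sum_le_card_nsmul _ _ _ fun j hj => hB j hj _).trans_eq (nsmul_eq_mul _ _)

end MvPolynomial

theorem prod_erase_range_abs_sub {j k : ℕ} (hj : j ≤ k) :
    ∏ i ∈ (range (k + 1)).erase j, |(j : ℝ) - i| = j ! * (k - j) ! := by
  obtain ⟨d, rfl⟩ := Nat.exists_eq_add_of_le hj
  induction d with
  | zero =>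
    rw [add_zero, range_add_one, erase_insert notMem_range_self, Nat.sub_self,
      Nat.factorial_zero, Nat.cast_one, mul_one, ← Nat.descFactorial_self,
      Nat.descFactorial_eq_prod_range, Nat.cast_prod]
    refine prod_congr rfl fun i hi => ?_
    have hij : i ≤ j := (mem_range.mp hi).le
    rw [Nat.cast_sub hij, abs_of_nonneg (sub_nonneg.mpr (by exact_mod_cast hij))]
  | succ d ih =>
    rw [← add_assoc, range_add_one, erase_insert_of_ne (by omega), prod_insert (by simp),
      ih (by omega), Nat.add_sub_cancel_left, add_assoc, Nat.add_sub_cancel_left,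
      Nat.factorial_succ]
    push_cast
    rw [show (j : ℝ) - (j + (d + 1)) = -(d + 1) by ring, abs_neg, abs_of_pos (by positivity)]
    ring

theorem pow_div_factorial_mul_factorial_le {j k : ℕ} (hj : j ≤ k) :
    (k : ℝ) ^ k / (j ! * (k - j) !) ≤ (2 * Real.exp 1) ^ k := by
  have h := Nat.choose_mul_factorial_mul_factorial hj
  calc (k : ℝ) ^ k / (j ! * (k - j) !) = k.choose j * ((k : ℝ) ^ k / k !) := by
        have hc : (k.choose j : ℝ) ≠ 0 := by exact_mod_cast (Nat.choose_pos hj).ne'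
        rw [← h]; push_cast; field_simp
    _ ≤ 2 ^ k * Real.exp k := by
        gcongr
        · exact_mod_cast Nat.choose_le_two_pow k j
        · exact Real.pow_div_factorial_le_exp _ k.cast_nonneg k
    _ = (2 * Real.exp 1) ^ k := by rw [mul_pow, Real.exp_one_pow]

/-- For `k = 0` the only node is `0 / 0 = 0`. -/
noncomputable def equispacedNode (k j : ℕ) : ℂ := ((j / k : ℝ) : ℂ)

theorem injOn_equispacedNode (k : ℕ) : Set.InjOn (equispacedNode k) (range (k + 1)) := by
  rcases Nat.eq_zero_or_pos k with rfl | hk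
  · simp [Set.InjOn]
  · intro a _ b _ hab
    simpa [equispacedNode, hk.ne'] using hab

theorem abs_natCast_div_le_one {j k : ℕ} (hj : j ≤ k) : |(j / k : ℝ)| ≤ 1 := by
  rw [abs_of_nonneg (by positivity)]
  exact div_le_one_of_le₀ (by exact_mod_cast hj) k.cast_nonneg

theorem norm_equispacedNode_le {k j : ℕ} (hj : j ≤ k) : ‖equispacedNode k j‖ ≤ 1 := by
  rw [equispacedNode, Complex.norm_real, Real.norm_eq_abs]
  exact abs_natCast_div_le_one hj

theorem norm_nodalWeight_equispacedNode {k j : ℕ} (hj : j ≤ k) :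
    ‖Lagrange.nodalWeight (range (k + 1)) (equispacedNode k) j‖ =
      (k : ℝ) ^ k / (j ! * (k - j) !) := by
  have hnorm : ∀ i, ‖(equispacedNode k j - equispacedNode k i)⁻¹‖ = k / |(j : ℝ) - i| := by
    intro i
    rw [equispacedNode, equispacedNode, ← Complex.ofReal_sub, norm_inv, Complex.norm_real,
      Real.norm_eq_abs, ← sub_div, abs_div, Nat.abs_cast, inv_div]
  rw [Lagrange.nodalWeight, norm_prod]
  simp_rw [hnorm]
  rw [prod_div_distrib, prod_const, card_erase_of_mem (mem_range.mpr (by omega)), card_range,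
    Nat.add_sub_cancel, prod_erase_range_abs_sub hj]

theorem norm_coeff_basis_equispacedNode_le {k j : ℕ} (hj : j ≤ k) (m : ℕ) :
    ‖(Lagrange.basis (range (k + 1)) (equispacedNode k) j).coeff m‖ ≤
      (4 * Real.exp 1) ^ k := by
  have hv : ∀ i ∈ range (k + 1), ‖equispacedNode k i‖ ≤ 1 := fun i hi =>
    norm_equispacedNode_le (mem_range_succ_iff.mp hi)
  calc _ ≤ (2 * Real.exp 1) ^ k * 2 ^ k := by
        refine (Lagrange.norm_coeff_basis_le hv j m).trans ?_
        rw [norm_nodalWeight_equispacedNode hj, card_erase_of_mem (mem_range.mpr (by omega)),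
          card_range, Nat.add_sub_cancel]
        gcongr
        exact pow_div_factorial_mul_factorial_le hj
    _ = (4 * Real.exp 1) ^ k := by rw [← mul_pow]; ring_nf

theorem MvPolynomial.bddAbove_norm_eval_cube {σ : Type*} [Fintype σ] (p : MvPolynomial σ ℂ) :
    BddAbove (Set.range fun t : {t : σ → ℝ // ∀ i, |t i| ≤ 1} =>
      ‖MvPolynomial.eval (fun i => ((t : σ → ℝ) i : ℂ)) p‖) := by
  have hcube : IsCompact {t : σ → ℝ | ∀ i, |t i| ≤ 1} := by
    convert isCompact_univ_pi fun _ : σ => isCompact_Icc (a := (-1 : ℝ)) (b := 1) using 1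
    ext t
    simp [abs_le, Pi.le_def, forall_and]
  have : CompactSpace {t : σ → ℝ // ∀ i, |t i| ≤ 1} := isCompact_iff_compactSpace.mp hcube
  have hcont : Continuous fun t : {t : σ → ℝ // ∀ i, |t i| ≤ 1} => fun i => ((t : σ → ℝ) i : ℂ) :=
    continuous_pi fun i =>
      Complex.continuous_ofReal.comp ((continuous_apply i).comp continuous_subtype_val)
  exact (isCompact_range ((MvPolynomial.continuous_eval p).comp hcont).norm).bddAbove

theorem mv_coeff_bound_of_sup_on_cube_general (n : ℕ) :
    ∃ R : ℝ, 0 < R ∧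
      ∀ (k : ℕ) (p : MvPolynomial (Fin n) ℂ), p.totalDegree ≤ k →
        ∀ α : Fin n →₀ ℕ, ‖MvPolynomial.coeff α p‖ ≤
          R ^ k * ⨆ t : {t : Fin n → ℝ // ∀ i, |t i| ≤ 1},
            ‖MvPolynomial.eval (fun i => ((t : Fin n → ℝ) i : ℂ)) p‖ := by
  refine ⟨(8 * Real.exp 1) ^ n, by positivity, fun k p hp α => ?_⟩
  set M := ⨆ t : {t : Fin n → ℝ // ∀ i, |t i| ≤ 1},
    ‖MvPolynomial.eval (fun i => ((t : Fin n → ℝ) i : ℂ)) p‖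
  have hdeg : ∀ i, p.degreeOf i < #(range (k + 1)) := fun i => by
    rw [card_range]
    exact Nat.lt_succ_of_le ((MvPolynomial.degreeOf_le_totalDegree p i).trans hp)
  have hnodes : ∀ x ∈ Fintype.piFinset fun _ => range (k + 1),
      ‖MvPolynomial.eval (fun i => equispacedNode k (x i)) p‖ ≤ M := fun x hx =>
    le_ciSup (MvPolynomial.bddAbove_norm_eval_cube p) ⟨fun i => x i / k, fun i =>
      abs_natCast_div_le_one (mem_range_succ_iff.mp (Fintype.mem_piFinset.mp hx i))⟩
  have hM : 0 ≤ M := Real.iSup_nonneg fun _ => norm_nonneg _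
  calc _ ≤ ((k + 1) * (4 * Real.exp 1) ^ k) ^ n * M := by
        simpa using MvPolynomial.norm_coeff_le_of_norm_eval_le (injOn_equispacedNode k) hdeg
          (fun j hj => norm_coeff_basis_equispacedNode_le (mem_range_succ_iff.mp hj))
          hnodes hM α
    _ ≤ (2 ^ k * (4 * Real.exp 1) ^ k) ^ n * M := by
        gcongr
        exact_mod_cast Nat.lt_two_pow_self
    _ = ((8 * Real.exp 1) ^ n) ^ k * M := by
        rw [← mul_pow, ← pow_mul, ← pow_mul, mul_comm k]
        ring_nf

/-- Lemma 2.3 of Eastwood–Graham: a real-variable analogue of Cauchy estimates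
for polynomials on `ℝ^n`.  For each `n ≥ 1` there is a constant `R > 0` such
that for every polynomial `p(t) = ∑_{|α| ≤ k} c_α t^α` on `ℝ^n` of total degree
at most `k` with complex coefficients, every coefficient satisfies
`|c_α| ≤ R ^ k * sup { |p(t)| : |t₁| ≤ 1, …, |tₙ| ≤ 1 }`. -/
theorem mv_coeff_bound_of_sup_on_cube (n : ℕ) (hn : 1 ≤ n) :
    ∃ R : ℝ, 0 < R ∧
      ∀ (k : ℕ) (p : MvPolynomial (Fin n) ℂ), p.totalDegree ≤ k →
        ∀ α : Fin n →₀ ℕ, ‖MvPolynomial.coeff α p‖ ≤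
          R ^ k * ⨆ t : {t : Fin n → ℝ // ∀ i, |t i| ≤ 1},
            ‖MvPolynomial.eval (fun i => ((t : Fin n → ℝ) i : ℂ)) p‖ :=
  mv_coeff_bound_of_sup_on_cube_general n
end

section
/- Let a_k : B \to \mathbb{C} (k \in \mathbb{N}) be C^1 functions on an open ball B centered at the origin of \mathbb{R}^m \times \mathbb{R}^m, satisfying for every j = 1, \dots, m: \partial a_0 / \partial t_j = 0 on B, and \partial a_k / \partial t_j = \partial a_{k-1} / \partial s_j on B for every k \ge 1. Then there exist an open ball B' centered at the origin of \mathbb{R}^m and C^\infty functions b_k : B' \to \mathbb{C} (k \in \mathbb{N}) such that a_k(s,t) = \sum_{|\alpha| \le k} \frac{1}{\alpha!} t^\alpha \partial_s^\alpha b_{k - |\alpha|}(s) for all k and all (s,t) \in B with s \in B' and t \in B'. In particular each a_k is a polynomial in t of degree at most k. -/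
/-
Each `t ↦ aₖ(s, t)` is a polynomial of degree `≤ k` on the ball. For `k = 0` its gradient
vanishes. If `aₖ(s, ·)` is a polynomial, so are its `s`-derivatives, hence the `t`-gradient of
`aₖ₊₁(s, ·)`; comparing derivatives along the rays `r ↦ r • t` shows that a function whose
gradient is polynomial of degree `≤ k` is itself polynomial of degree `≤ k + 1`.

The coefficients `c_{k,α}(s)` are read off by fixed linear combinations of the values
`aₖ(s, xᵥ)` at a grid of nodes (a tensor product of Vandermonde inversions), so they are
differentiable in `s`. Comparing coefficients in `∂aₖ₊₁/∂tⱼ = ∂aₖ/∂sⱼ` gives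
`∂ⱼ c_{k,α} = (αⱼ + 1) c_{k+1,α+eⱼ}`. The family `α! c_{i+|α|,α}` is therefore closed under
partial derivatives, which makes every member smooth, and `∂^α c_{i,0} = α! c_{i+|α|,α}`:
this is formula (2.3) with `bᵢ = c_{i,0}`.
-/

noncomputable def partialDerivS (m : ℕ) (j : Fin m) (g : (Fin m → ℝ) → ℂ) :
    (Fin m → ℝ) → ℂ :=
  fun s => fderiv ℝ g s (Pi.single j 1)

noncomputable def multiDeriv (m : ℕ) (α : Fin m → ℕ) (g : (Fin m → ℝ) → ℂ) :
    (Fin m → ℝ) → ℂ :=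
  (List.finRange m).foldr (fun j h => (partialDerivS m j)^[α j] h) g

def multiIdxLe (m k : ℕ) : Finset (Fin m → ℕ) :=
  (Fintype.piFinset fun _ : Fin m => Finset.range (k + 1)).filter
    fun α => (∑ j, α j) ≤ k

open Metric Finset

namespace CoefficientsPolynomial

variable {m : ℕ}

lemma mem_multiIdxLe {k : ℕ} {α : Fin m → ℕ} : α ∈ multiIdxLe m k ↔ ∑ j, α j ≤ k := by
  simp only [multiIdxLe, mem_filter, Fintype.mem_piFinset, mem_range, and_iff_right_iff_imp]
  exact fun h j =>
    Nat.lt_succ_of_le ((single_le_sum (fun _ _ => Nat.zero_le _) (mem_univ j)).trans h)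

lemma le_of_mem_multiIdxLe {k : ℕ} {α : Fin m → ℕ} (hα : α ∈ multiIdxLe m k) (j : Fin m) :
    α j ≤ k :=
  (single_le_sum (fun _ _ => Nat.zero_le _) (mem_univ j)).trans (mem_multiIdxLe.mp hα)

lemma sum_add_single (α : Fin m → ℕ) (j : Fin m) (n : ℕ) :
    ∑ l, (α + Pi.single j n : Fin m → ℕ) l = ∑ l, α l + n := by
  simp [sum_add_distrib]

lemma add_single_mem_multiIdxLe {k : ℕ} {α : Fin m → ℕ} (hα : α ∈ multiIdxLe m k) (j : Fin m) :
    α + Pi.single j 1 ∈ multiIdxLe m (k + 1) := by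
  rw [mem_multiIdxLe, sum_add_single]
  exact Nat.add_le_add_right (mem_multiIdxLe.mp hα) 1

lemma sub_single_add_single {β : Fin m → ℕ} {j : Fin m} (hj : β j ≠ 0) :
    β - Pi.single j 1 + Pi.single j 1 = β := by
  ext l
  rcases eq_or_ne l j with rfl | h
  · simp only [Pi.add_apply, Pi.sub_apply, Pi.single_eq_same]; omega
  · simp [h]

lemma sub_single_mem_multiIdxLe {k : ℕ} {β : Fin m → ℕ} (hβ : β ∈ multiIdxLe m (k + 1))
    {j : Fin m} (hj : β j ≠ 0) : β - Pi.single j 1 ∈ multiIdxLe m k := by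
  have h := sum_add_single (β - Pi.single j 1) j 1
  rw [sub_single_add_single hj] at h
  have := mem_multiIdxLe.mp hβ
  exact mem_multiIdxLe.mpr (by omega)

lemma prod_factorial_add_single (γ : Fin m → ℕ) (j : Fin m) :
    ∏ l, ((γ + Pi.single j 1 : Fin m → ℕ) l).factorial = (γ j + 1) * ∏ l, (γ l).factorial := by
  have herase : ∏ l ∈ univ.erase j, ((γ + Pi.single j 1 : Fin m → ℕ) l).factorial =
      ∏ l ∈ univ.erase j, (γ l).factorial :=
    prod_congr rfl fun l hl => by simp [ne_of_mem_erase hl]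
  rw [← mul_prod_erase univ _ (mem_univ j),
    ← mul_prod_erase univ (fun l => (γ l).factorial) (mem_univ j), herase]
  simp [Nat.factorial_succ, mul_assoc]

lemma fderiv_apply_eq_sum_partialDerivS (G : (Fin m → ℝ) → ℂ) (x v : Fin m → ℝ) :
    fderiv ℝ G x v = ∑ j, v j * partialDerivS m j G x := by
  conv_lhs => rw [← (Pi.basisFun ℝ (Fin m)).sum_repr v]
  simp [partialDerivS, Complex.real_smul]

lemma _root_.Set.EqOn.partialDerivS {U : Set (Fin m → ℝ)} (hU : IsOpen U)
    {f g : (Fin m → ℝ) → ℂ} (h : Set.EqOn f g U) (j : Fin m) :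
    Set.EqOn (partialDerivS m j f) (partialDerivS m j g) U := fun _ hx => by
  rw [_root_.partialDerivS, _root_.partialDerivS, Filter.EventuallyEq.fderiv_eq
    (Filter.eventuallyEq_of_mem (hU.mem_nhds hx) h)]

lemma partialDerivS_sum_smul {ι : Type*} (s : Finset ι) (c : ι → ℂ)
    {f : ι → (Fin m → ℝ) → ℂ} {x : Fin m → ℝ} (hf : ∀ i ∈ s, DifferentiableAt ℝ (f i) x)
    (j : Fin m) :
    partialDerivS m j (∑ i ∈ s, c i • f i) x = ∑ i ∈ s, c i * partialDerivS m j (f i) x := by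
  rw [partialDerivS, fderiv_sum fun i hi => (hf i hi).const_smul (c i)]
  simp only [_root_.sum_apply]
  exact sum_congr rfl fun i hi => by rw [fderiv_const_smul (hf i hi)]; rfl

lemma partialDerivS_const_mul {f : (Fin m → ℝ) → ℂ} {x : Fin m → ℝ}
    (hf : DifferentiableAt ℝ f x) (c : ℂ) (j : Fin m) :
    partialDerivS m j (fun y => c * f y) x = c * partialDerivS m j f x := by
  simp [partialDerivS, fderiv_const_mul hf]

noncomputable def cmonomial (α : Fin m → ℕ) (t : Fin m → ℝ) : ℂ :=
  ∏ j, (t j : ℂ) ^ α j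

@[simp] lemma cmonomial_zero : cmonomial (0 : Fin m → ℕ) = 1 := by
  ext t; simp [cmonomial]

lemma cmonomial_smul (α : Fin m → ℕ) (r : ℝ) (t : Fin m → ℝ) :
    cmonomial α (r • t) = (r : ℂ) ^ (∑ j, α j) * cmonomial α t := by
  simp [cmonomial, mul_pow, prod_mul_distrib, prod_pow_eq_pow_sum]

lemma cmonomial_add_single (α : Fin m → ℕ) (j : Fin m) (t : Fin m → ℝ) :
    cmonomial (α + Pi.single j 1 : Fin m → ℕ) t = t j * cmonomial α t := by
  simp only [cmonomial, Pi.add_apply, pow_add, prod_mul_distrib]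
  rw [mul_comm, Fintype.prod_eq_single j (fun l hl => by simp [hl])]
  simp

lemma differentiable_cmonomial (β : Fin m → ℕ) : Differentiable ℝ (cmonomial β) := by
  unfold cmonomial; fun_prop

lemma partialDerivS_cmonomial (β : Fin m → ℕ) (j : Fin m) (t : Fin m → ℝ) :
    partialDerivS m j (cmonomial β) t = β j * cmonomial (β - Pi.single j 1) t := by
  have hpow : ∀ l ∈ univ, HasFDerivAt (fun t : Fin m → ℝ => (t l : ℂ) ^ β l)
      ((β l * (t l : ℂ) ^ (β l - 1)) • Complex.ofRealCLM.comp (ContinuousLinearMap.proj l)) t :=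
    fun l _ => (hasDerivAt_pow (β l) (t l : ℂ)).comp_hasFDerivAt t
      (Complex.ofRealCLM.comp (ContinuousLinearMap.proj l : (Fin m → ℝ) →L[ℝ] ℝ)).hasFDerivAt
  rw [partialDerivS, show cmonomial β = fun t => ∏ l, (t l : ℂ) ^ β l from rfl,
    (HasFDerivAt.finsetProd hpow).fderiv]
  simp only [_root_.sum_apply, _root_.smul_apply, ContinuousLinearMap.comp_apply,
    ContinuousLinearMap.proj_apply, Pi.single_apply, Complex.ofRealCLM_apply, smul_eq_mul,
    cmonomial, Pi.sub_apply, ← mul_prod_erase univ _ (mem_univ j), ↓reduceIte]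
  rw [Fintype.sum_eq_single j (fun l hl => by simp [hl])]
  have herase : ∏ l ∈ univ.erase j, (t l : ℂ) ^ (β l - if l = j then 1 else 0) =
      ∏ l ∈ univ.erase j, (t l : ℂ) ^ β l :=
    prod_congr rfl fun l hl => by rw [if_neg (ne_of_mem_erase hl), Nat.sub_zero]
  rw [herase, if_pos rfl, Complex.ofReal_one, mul_one]
  ring

noncomputable def polyLe (m K : ℕ) : Submodule ℂ ((Fin m → ℝ) → ℂ) :=
  Submodule.span ℂ (cmonomial '' ↑(multiIdxLe m K))

lemma cmonomial_mem_polyLe {K : ℕ} {β : Fin m → ℕ} (hβ : β ∈ multiIdxLe m K) :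
    cmonomial β ∈ polyLe m K :=
  Submodule.subset_span ⟨β, hβ, rfl⟩

lemma exists_eq_sum_of_mem_polyLe {K : ℕ} {P : (Fin m → ℝ) → ℂ} (hP : P ∈ polyLe m K) :
    ∃ u : (Fin m → ℕ) → ℂ, P = ∑ β ∈ multiIdxLe m K, u β • cmonomial β := by
  obtain ⟨l, hl, rfl⟩ := (Finsupp.mem_span_image_iff_linearCombination ℂ).mp hP
  exact ⟨l, Finsupp.linearCombination_apply_of_mem_supported ℂ hl⟩

structure Interpolation (m K : ℕ) (U : Set (Fin m → ℝ)) where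
  node : (Fin m → Fin (K + 1)) → Fin m → ℝ
  weight : (Fin m → ℕ) → (Fin m → Fin (K + 1)) → ℂ
  node_mem : ∀ v, node v ∈ U
  sum_weight_mul_cmonomial : ∀ α ∈ multiIdxLe m K, ∀ β ∈ multiIdxLe m K,
    ∑ v, weight α v * cmonomial β (node v) = if α = β then 1 else 0

namespace Interpolation

variable {K : ℕ} {U : Set (Fin m → ℝ)} (I : Interpolation m K U)

noncomputable def coeff (α : Fin m → ℕ) : ((Fin m → ℝ) → ℂ) →ₗ[ℂ] ℂ :=
  ∑ v, I.weight α v • LinearMap.proj (I.node v)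

lemma coeff_apply (α : Fin m → ℕ) (F : (Fin m → ℝ) → ℂ) :
    I.coeff α F = ∑ v, I.weight α v * F (I.node v) := by
  simp [coeff]

lemma coeff_cmonomial {α β : Fin m → ℕ} (hα : α ∈ multiIdxLe m K) (hβ : β ∈ multiIdxLe m K) :
    I.coeff α (cmonomial β) = if α = β then 1 else 0 := by
  rw [coeff_apply, I.sum_weight_mul_cmonomial α hα β hβ]

lemma coeff_congr {F G : (Fin m → ℝ) → ℂ} (h : Set.EqOn F G U) (α : Fin m → ℕ) :
    I.coeff α F = I.coeff α G := by
  simp only [coeff_apply, h (I.node_mem _)]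

lemma coeff_sum_smul_cmonomial {α : Fin m → ℕ} (hα : α ∈ multiIdxLe m K)
    (u : (Fin m → ℕ) → ℂ) : I.coeff α (∑ β ∈ multiIdxLe m K, u β • cmonomial β) = u α := by
  rw [map_sum, sum_congr rfl fun β hβ => by rw [map_smul, I.coeff_cmonomial hα hβ]]
  simp [hα]

lemma eq_sum_coeff_of_mem_polyLe {P : (Fin m → ℝ) → ℂ} (hP : P ∈ polyLe m K) :
    P = ∑ α ∈ multiIdxLe m K, I.coeff α P • cmonomial α := by
  obtain ⟨u, rfl⟩ := exists_eq_sum_of_mem_polyLe hP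
  exact sum_congr rfl fun α hα => by rw [I.coeff_sum_smul_cmonomial hα]

lemma eqOn_sum_coeff {F P : (Fin m → ℝ) → ℂ} (hP : P ∈ polyLe m K) (hFP : Set.EqOn F P U) :
    Set.EqOn F (∑ α ∈ multiIdxLe m K, I.coeff α F • cmonomial α) U := by
  simp_rw [I.coeff_congr hFP, ← I.eq_sum_coeff_of_mem_polyLe hP]
  exact hFP

lemma coeff_partialDerivS_sum {α : Fin m → ℕ} (hα : α ∈ multiIdxLe m K) (u : (Fin m → ℕ) → ℂ)
    (j : Fin m) :
    I.coeff α (partialDerivS m j (∑ β ∈ multiIdxLe m (K + 1), u β • cmonomial β)) =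
      (α j + 1) * u (α + Pi.single j 1) := by
  have hderiv : partialDerivS m j (∑ β ∈ multiIdxLe m (K + 1), u β • cmonomial β) =
      ∑ β ∈ multiIdxLe m (K + 1), (u β * β j) • cmonomial (β - Pi.single j 1) := by
    ext t
    rw [partialDerivS_sum_smul _ _ fun β _ => (differentiable_cmonomial β).differentiableAt]
    simp [partialDerivS_cmonomial, mul_assoc]
  rw [hderiv, map_sum, sum_eq_single (α + Pi.single j 1)]
  · simp [I.coeff_cmonomial hα hα, mul_comm]
  · intro β hβ hne
    by_cases hj : β j = 0
    · simp [hj]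
    · rw [map_smul, I.coeff_cmonomial hα (sub_single_mem_multiIdxLe hβ hj), if_neg, smul_zero]
      rintro rfl
      exact hne (sub_single_add_single hj).symm
  · exact fun h => absurd (add_single_mem_multiIdxLe hα j) h

end Interpolation

lemma exists_sum_mul_pow_eq_ite {n : ℕ} {x : Fin n → ℂ} (hx : Function.Injective x) :
    ∃ w : Fin n → Fin n → ℂ, ∀ a b : Fin n,
      ∑ v, w a v * x v ^ (b : ℕ) = if a = b then 1 else 0 := by
  let M := Matrix.vandermonde x
  have hM : IsUnit M.det := isUnit_iff_ne_zero.mpr (Matrix.det_vandermonde_ne_zero_iff.mpr hx)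
  refine ⟨fun a v => (M⁻¹ : Matrix (Fin n) (Fin n) ℂ) a v, fun a b => ?_⟩
  simpa [Matrix.mul_apply, Matrix.one_apply, M] using
    congrFun (congrFun (Matrix.nonsing_inv_mul M hM) a) b

lemma Interpolation.nonempty_ball (K : ℕ) {ρ : ℝ} (hρ : 0 < ρ) :
    Nonempty (Interpolation m K (ball 0 ρ)) := by
  -- Grid nodes `x v = ρ v / (K + 1)`; in each coordinate the weights invert a Vandermonde matrix.
  let x : Fin (K + 1) → ℝ := fun v => ρ * v / (K + 1)
  have hx_lt : ∀ v, ‖x v‖ < ρ := fun v => by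
    have hv : (v : ℝ) < K + 1 := by exact_mod_cast v.isLt
    rw [Real.norm_of_nonneg (by positivity), div_lt_iff₀ (by positivity)]
    exact mul_lt_mul_of_pos_left hv hρ
  have hx_inj : Function.Injective fun v => (x v : ℂ) := fun v v' h => by
    have : (v : ℝ) = v' := by
      simpa [x, hρ.ne', Nat.cast_add_one_ne_zero] using h
    exact Fin.ext (by exact_mod_cast this)
  obtain ⟨w, hw⟩ := exists_sum_mul_pow_eq_ite hx_inj
  let w' : ℕ → Fin (K + 1) → ℂ := fun n v => if h : n < K + 1 then w ⟨n, h⟩ v else 0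
  have hw' : ∀ a ≤ K, ∀ b ≤ K, ∑ v, w' a v * (x v : ℂ) ^ b = if a = b then 1 else 0 :=
    fun a ha b hb => by
      simpa [w', ha, Fin.ext_iff] using hw ⟨a, by omega⟩ ⟨b, by omega⟩
  refine ⟨⟨fun v j => x (v j), fun α v => ∏ j, w' (α j) (v j), fun v => ?_, ?_⟩⟩
  · exact mem_ball_zero_iff.mpr ((pi_norm_lt_iff hρ).mpr fun j => hx_lt (v j))
  · intro α hα β hβ
    simp only [cmonomial, ← prod_mul_distrib]
    rw [← Fintype.prod_sum (fun j u => w' (α j) u * (x u : ℂ) ^ β j)]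
    simp only [hw' _ (le_of_mem_multiIdxLe hα _) _ (le_of_mem_multiIdxLe hβ _), prod_boole,
      funext_iff, mem_univ, true_implies]

section RadialPrimitive

/-- For polynomials `Pⱼ = ∑ α, u j α • t^α`, the polynomial vanishing at `0` whose derivative
along each ray `r ↦ r • t` is `∑ⱼ tⱼ Pⱼ (r • t)`. -/
noncomputable def radialPrimitive (K : ℕ) (u : Fin m → (Fin m → ℕ) → ℂ) : (Fin m → ℝ) → ℂ :=
  ∑ j, ∑ α ∈ multiIdxLe m K, (u j α / (∑ l, α l + 1 : ℕ)) • cmonomial (α + Pi.single j 1)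

variable {K : ℕ} (u : Fin m → (Fin m → ℕ) → ℂ)

lemma radialPrimitive_mem_polyLe : radialPrimitive K u ∈ polyLe m (K + 1) :=
  sum_mem fun j _ => sum_mem fun _ hα =>
    Submodule.smul_mem _ _ (cmonomial_mem_polyLe (add_single_mem_multiIdxLe hα j))

lemma radialPrimitive_smul (r : ℝ) (t : Fin m → ℝ) :
    radialPrimitive K u (r • t) = ∑ j, ∑ α ∈ multiIdxLe m K, u j α / (∑ l, α l + 1 : ℕ) *
      ((r : ℂ) ^ (∑ l, α l + 1) * cmonomial (α + Pi.single j 1) t) := by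
  simp [radialPrimitive, cmonomial_smul, sum_add_distrib]

lemma hasDerivAt_radialPrimitive_smul (t : Fin m → ℝ) (r : ℝ) :
    HasDerivAt (fun r : ℝ => radialPrimitive K u (r • t))
      (∑ j, t j * ∑ α ∈ multiIdxLe m K, u j α * cmonomial α (r • t)) r := by
  have hpow : ∀ n : ℕ, HasDerivAt (fun r : ℝ => (r : ℂ) ^ (n + 1)) ((n + 1) * (r : ℂ) ^ n) r :=
    fun n => by simpa using (hasDerivAt_pow (n + 1) (r : ℂ)).comp_ofReal
  simp_rw [radialPrimitive_smul]
  refine (HasDerivAt.fun_sum fun j _ => HasDerivAt.fun_sum fun α _ =>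
    ((hpow (∑ l, α l)).mul_const (cmonomial (α + Pi.single j 1) t)).const_mul
      (u j α / (∑ l, α l + 1 : ℕ))).congr_deriv ?_
  simp only [mul_sum, cmonomial_smul, cmonomial_add_single]
  refine sum_congr rfl fun j _ => sum_congr rfl fun α _ => ?_
  have hne : ((∑ l, α l + 1 : ℕ) : ℂ) ≠ 0 := Nat.cast_ne_zero.mpr (Nat.succ_ne_zero _)
  push_cast at hne ⊢
  field_simp

theorem exists_polyLe_succ_eqOn {U : Set (Fin m → ℝ)} (hU : IsOpen U)
    (hU₀ : StarConvex ℝ 0 U) {G : (Fin m → ℝ) → ℂ} (hG : DifferentiableOn ℝ G U)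
    (hP : ∀ j, ∃ P ∈ polyLe m K, Set.EqOn (partialDerivS m j G) P U) :
    ∃ Q ∈ polyLe m (K + 1), Set.EqOn G Q U := by
  choose P hP hGP using hP
  choose u hu using fun j => exists_eq_sum_of_mem_polyLe (hP j)
  let Q : (Fin m → ℝ) → ℂ := G 0 • cmonomial 0 + radialPrimitive K u
  refine ⟨Q, add_mem (Submodule.smul_mem _ _
    (cmonomial_mem_polyLe (by simp [mem_multiIdxLe]))) (radialPrimitive_mem_polyLe u),
    fun t ht => ?_⟩
  have hray : ∀ r ∈ Set.Icc (0 : ℝ) 1, r • t ∈ U := fun r hr => hU₀.smul_mem ht hr.1 hr.2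
  -- `G` and `Q` have the same derivative along the ray through `t`, and agree at `0`.
  let D : ℝ → ℂ := fun r => ∑ j, t j * ∑ α ∈ multiIdxLe m K, u j α * cmonomial α (r • t)
  have hG_ray : ∀ r ∈ Set.Icc (0 : ℝ) 1, HasDerivAt (fun r : ℝ => G (r • t)) (D r) r :=
    fun r hr => by
      have hGr := (hG.differentiableAt (hU.mem_nhds (hray r hr))).hasFDerivAt.comp_hasDerivAt r
        ((hasDerivAt_id r).smul_const t)
      simp only [id, one_smul, fderiv_apply_eq_sum_partialDerivS] at hGr
      refine hGr.congr_deriv (sum_congr rfl fun j _ => ?_)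
      rw [hGP j (hray r hr), hu j]
      simp
  have hQ_ray : ∀ r : ℝ, HasDerivAt (fun r : ℝ => Q (r • t)) (D r) r := fun r => by
    simpa [Q] using (hasDerivAt_radialPrimitive_smul u t r).const_add (G 0)
  simpa using eq_of_has_deriv_right_eq (a := 0) (b := 1)
    (fun r hr => (hG_ray r (Set.Ico_subset_Icc_self hr)).hasDerivWithinAt)
    (fun r _ => (hQ_ray r).hasDerivWithinAt)
    (fun r hr => (hG_ray r hr).continuousAt.continuousWithinAt)
    (fun r _ => (hQ_ray r).continuousAt.continuousWithinAt)
    (by simpa [Q] using radialPrimitive_smul (K := K) u 0 t) 1 (by simp)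

end RadialPrimitive

theorem contDiffOn_of_partialDerivS_eqOn {ι : Type*} {U : Set (Fin m → ℝ)} (hU : IsOpen U)
    {g : ι → (Fin m → ℝ) → ℂ} (hg : ∀ i, DifferentiableOn ℝ (g i) U)
    (hσ : ∀ i j, ∃ i', Set.EqOn (partialDerivS m j (g i)) (g i') U) (i : ι) :
    ContDiffOn ℝ (⊤ : ℕ∞) (g i) U := by
  choose σ hσ using hσ
  suffices ∀ n : ℕ, ∀ i, ContDiffOn ℝ n (g i) U from contDiffOn_infty.mpr fun n => this n i
  intro n
  induction n with
  | zero => exact fun i => contDiffOn_zero.mpr (hg i).continuousOn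
  | succ n ih =>
    intro i
    rw [Nat.cast_succ, contDiffOn_succ_iff_fderiv_apply hU.uniqueDiffOn]
    refine ⟨hg i, by simp, fun y => ?_⟩
    refine (ContDiffOn.sum (s := univ) fun j _ => (ih (σ i j)).const_smul (y j : ℂ)).congr
      fun x hx => ?_
    rw [fderivWithin_of_isOpen hU hx, fderiv_apply_eq_sum_partialDerivS]
    exact sum_congr rfl fun j _ => by rw [hσ i j hx]; rfl

theorem multiDeriv_eqOn {U : Set (Fin m → ℝ)} (hU : IsOpen U)
    {g : (Fin m → ℕ) → (Fin m → ℝ) → ℂ}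
    (hg : ∀ γ j, Set.EqOn (partialDerivS m j (g γ)) (g (γ + Pi.single j 1)) U)
    (α : Fin m → ℕ) : Set.EqOn (multiDeriv m α (g 0)) (g α) U := by
  have hiterate : ∀ j n γ {h}, Set.EqOn h (g γ) U →
      Set.EqOn ((partialDerivS m j)^[n] h) (g (γ + Pi.single j n)) U := by
    intro j n
    induction n with
    | zero => intro γ h hh; simpa using hh
    | succ n ih =>
      intro γ h hh
      rw [Function.iterate_succ_apply', Pi.single_add, ← add_assoc]
      exact ((ih γ hh).partialDerivS hU j).trans (hg _ j)
  have hfoldr : ∀ l : List (Fin m), Set.EqOn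
      (l.foldr (fun j h => (partialDerivS m j)^[α j] h) (g 0))
      (g (l.map fun j => Pi.single j (α j)).sum) U := by
    intro l
    induction l with
    | nil => simpa using Set.eqOn_refl _ _
    | cons j l ih =>
      rw [List.foldr_cons, List.map_cons, List.sum_cons, add_comm]
      exact hiterate j (α j) _ ih
  simpa [multiDeriv, ← Fin.sum_univ_def, univ_sum_single] using hfoldr (List.finRange m)

lemma mk_mem_ball_zero {ρ : ℝ} {s t : Fin m → ℝ} :
    (s, t) ∈ ball (0 : (Fin m → ℝ) × (Fin m → ℝ)) ρ ↔ s ∈ ball 0 ρ ∧ t ∈ ball 0 ρ := by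
  rw [← Prod.mk_zero_zero, ← ball_prod_same, Set.mem_prod]

section Slices

variable {A : (Fin m → ℝ) × (Fin m → ℝ) → ℂ} {s t : Fin m → ℝ}

lemma partialDerivS_slice_left (hA : DifferentiableAt ℝ A (s, t)) (j : Fin m) :
    partialDerivS m j (fun s' => A (s', t)) s = fderiv ℝ A (s, t) (Pi.single j 1, 0) := by
  have h : HasFDerivAt (fun s' => A (s', t)) ((fderiv ℝ A (s, t)).comp (.inl ℝ _ _)) s :=
    hA.hasFDerivAt.comp s (hasFDerivAt_prodMk_left s t)
  rw [partialDerivS, h.fderiv]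
  rfl

lemma partialDerivS_slice_right (hA : DifferentiableAt ℝ A (s, t)) (j : Fin m) :
    partialDerivS m j (fun t' => A (s, t')) t = fderiv ℝ A (s, t) (0, Pi.single j 1) := by
  have h : HasFDerivAt (fun t' => A (s, t')) ((fderiv ℝ A (s, t)).comp (.inr ℝ _ _)) t :=
    hA.hasFDerivAt.comp t (hasFDerivAt_prodMk_right s t)
  rw [partialDerivS, h.fderiv]
  rfl

variable {K : ℕ} {U : Set (Fin m → ℝ)} (I : Interpolation m K U)

lemma Interpolation.coeff_slice_eq_sum (α : Fin m → ℕ) :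
    (fun s' => I.coeff α fun t => A (s', t)) = ∑ v, I.weight α v • fun s' => A (s', I.node v) := by
  ext s'
  simp [Interpolation.coeff_apply]

lemma Interpolation.differentiableAt_coeff_slice
    (hA : ∀ t ∈ U, DifferentiableAt ℝ (fun s' => A (s', t)) s) (α : Fin m → ℕ) :
    DifferentiableAt ℝ (fun s' => I.coeff α fun t => A (s', t)) s := by
  rw [I.coeff_slice_eq_sum]
  exact DifferentiableAt.sum fun v _ => (hA _ (I.node_mem v)).const_smul _

lemma Interpolation.partialDerivS_coeff_slice
    (hA : ∀ t ∈ U, DifferentiableAt ℝ (fun s' => A (s', t)) s) (α : Fin m → ℕ) (j : Fin m) :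
    partialDerivS m j (fun s' => I.coeff α fun t => A (s', t)) s =
      I.coeff α fun t => partialDerivS m j (fun s' => A (s', t)) s := by
  rw [I.coeff_slice_eq_sum, partialDerivS_sum_smul _ _ fun v _ => hA _ (I.node_mem v),
    Interpolation.coeff_apply]

end Slices

structure IsCascade (ρ : ℝ) (a : ℕ → (Fin m → ℝ) × (Fin m → ℝ) → ℂ) : Prop where
  differentiableOn : ∀ k, DifferentiableOn ℝ (a k) (ball 0 ρ)
  fderiv_zero : ∀ j : Fin m, ∀ p ∈ ball (0 : (Fin m → ℝ) × (Fin m → ℝ)) ρ,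
    fderiv ℝ (a 0) p (0, Pi.single j 1) = 0
  fderiv_succ : ∀ (k : ℕ) (j : Fin m), ∀ p ∈ ball (0 : (Fin m → ℝ) × (Fin m → ℝ)) ρ,
    fderiv ℝ (a (k + 1)) p (0, Pi.single j 1) = fderiv ℝ (a k) p (Pi.single j 1, 0)

noncomputable def coeffT {ρ : ℝ} (I : ∀ k, Interpolation m k (ball 0 ρ))
    (a : ℕ → (Fin m → ℝ) × (Fin m → ℝ) → ℂ) (k : ℕ) (α : Fin m → ℕ) (s : Fin m → ℝ) : ℂ :=
  (I k).coeff α fun t => a k (s, t)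

/-- On the ball this is `∂_s^γ (coeffT I a i 0)`. -/
noncomputable def scaledCoeffT {ρ : ℝ} (I : ∀ k, Interpolation m k (ball 0 ρ))
    (a : ℕ → (Fin m → ℝ) × (Fin m → ℝ) → ℂ) (i : ℕ) (γ : Fin m → ℕ) : (Fin m → ℝ) → ℂ :=
  fun s => (∏ j, (γ j).factorial : ℕ) * coeffT I a (i + ∑ j, γ j) γ s

namespace IsCascade

variable {ρ : ℝ} {a : ℕ → (Fin m → ℝ) × (Fin m → ℝ) → ℂ} {s t : Fin m → ℝ}

lemma differentiableAt (ha : IsCascade ρ a) (k : ℕ) (hs : s ∈ ball 0 ρ) (ht : t ∈ ball 0 ρ) :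
    DifferentiableAt ℝ (a k) (s, t) :=
  (ha.differentiableOn k).differentiableAt (isOpen_ball.mem_nhds (mk_mem_ball_zero.mpr ⟨hs, ht⟩))

lemma differentiableAt_slice_left (ha : IsCascade ρ a) (k : ℕ) (hs : s ∈ ball 0 ρ)
    (ht : t ∈ ball 0 ρ) : DifferentiableAt ℝ (fun s' => a k (s', t)) s :=
  (ha.differentiableAt k hs ht).comp s (hasFDerivAt_prodMk_left s t).differentiableAt

lemma differentiableOn_slice_right (ha : IsCascade ρ a) (k : ℕ) (hs : s ∈ ball 0 ρ) :
    DifferentiableOn ℝ (fun t' => a k (s, t')) (ball 0 ρ) := fun t ht =>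
  ((ha.differentiableAt k hs ht).comp t
    (hasFDerivAt_prodMk_right s t).differentiableAt).differentiableWithinAt

lemma partialDerivS_zero (ha : IsCascade ρ a) (hs : s ∈ ball 0 ρ) (ht : t ∈ ball 0 ρ)
    (j : Fin m) : partialDerivS m j (fun t' => a 0 (s, t')) t = 0 := by
  rw [partialDerivS_slice_right (ha.differentiableAt 0 hs ht),
    ha.fderiv_zero j _ (mk_mem_ball_zero.mpr ⟨hs, ht⟩)]

lemma partialDerivS_succ (ha : IsCascade ρ a) (k : ℕ) (hs : s ∈ ball 0 ρ) (ht : t ∈ ball 0 ρ)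
    (j : Fin m) :
    partialDerivS m j (fun t' => a (k + 1) (s, t')) t =
      partialDerivS m j (fun s' => a k (s', t)) s := by
  rw [partialDerivS_slice_right (ha.differentiableAt _ hs ht),
    partialDerivS_slice_left (ha.differentiableAt _ hs ht),
    ha.fderiv_succ k j _ (mk_mem_ball_zero.mpr ⟨hs, ht⟩)]

lemma eqOn_slice_zero (ha : IsCascade ρ a) (hs : s ∈ ball 0 ρ) :
    Set.EqOn (fun t => a 0 (s, t)) (fun _ => a 0 (s, 0)) (ball 0 ρ) := fun t ht => by
  refine (convex_ball 0 ρ).is_const_of_fderivWithin_eq_zero (f := fun t => a 0 (s, t))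
    (ha.differentiableOn_slice_right 0 hs)
    (fun t' ht' => ?_) ht (mem_ball_self (pos_of_mem_ball hs))
  rw [fderivWithin_of_isOpen isOpen_ball ht']
  ext v
  simp [fderiv_apply_eq_sum_partialDerivS, ha.partialDerivS_zero hs ht']

variable (I : ∀ k, Interpolation m k (ball 0 ρ))

lemma differentiableAt_coeffT (ha : IsCascade ρ a) (k : ℕ) (α : Fin m → ℕ)
    (hs : s ∈ ball 0 ρ) : DifferentiableAt ℝ (coeffT I a k α) s :=
  (I k).differentiableAt_coeff_slice (fun _ ht => ha.differentiableAt_slice_left k hs ht) α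

lemma eqOn_partialDerivS_succ (ha : IsCascade ρ a) {k : ℕ}
    (hk : ∀ s ∈ ball (0 : Fin m → ℝ) ρ, Set.EqOn (fun t => a k (s, t))
      (∑ α ∈ multiIdxLe m k, coeffT I a k α s • cmonomial α) (ball 0 ρ))
    (hs : s ∈ ball 0 ρ) (j : Fin m) :
    Set.EqOn (partialDerivS m j fun t => a (k + 1) (s, t))
      (∑ α ∈ multiIdxLe m k, partialDerivS m j (coeffT I a k α) s • cmonomial α) (ball 0 ρ) :=
  fun t ht => by
    have hslice : Set.EqOn (fun s' => a k (s', t))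
        (∑ α ∈ multiIdxLe m k, cmonomial α t • coeffT I a k α) (ball 0 ρ) := fun s' hs' => by
      simpa [mul_comm] using hk s' hs' ht
    rw [ha.partialDerivS_succ k hs ht, hslice.partialDerivS isOpen_ball j hs,
      partialDerivS_sum_smul _ _ fun α _ => ha.differentiableAt_coeffT I k α hs]
    simp [mul_comm]

theorem eqOn_sum_coeffT (ha : IsCascade ρ a) (k : ℕ) (hs : s ∈ ball 0 ρ) :
    Set.EqOn (fun t => a k (s, t))
      (∑ α ∈ multiIdxLe m k, coeffT I a k α s • cmonomial α) (ball 0 ρ) := by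
  induction k generalizing s with
  | zero =>
    refine (I 0).eqOn_sum_coeff (P := a 0 (s, 0) • cmonomial 0) ?_ ?_
    · exact Submodule.smul_mem _ _ (cmonomial_mem_polyLe (by simp [mem_multiIdxLe]))
    · exact fun t ht => by simpa using ha.eqOn_slice_zero hs ht
  | succ k ih =>
    have hB : StarConvex ℝ 0 (ball (0 : Fin m → ℝ) ρ) :=
      (convex_ball 0 ρ).starConvex (mem_ball_self (pos_of_mem_ball hs))
    obtain ⟨Q, hQ, hEq⟩ := exists_polyLe_succ_eqOn isOpen_ball hB
      (ha.differentiableOn_slice_right (k + 1) hs) fun j =>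
        ⟨_, sum_mem fun α hα => Submodule.smul_mem _ _ (cmonomial_mem_polyLe hα),
          ha.eqOn_partialDerivS_succ I (fun _ hs' => ih hs') hs j⟩
    exact (I (k + 1)).eqOn_sum_coeff hQ hEq

theorem partialDerivS_coeffT (ha : IsCascade ρ a) {k : ℕ} {α : Fin m → ℕ}
    (hα : α ∈ multiIdxLe m k) (hs : s ∈ ball 0 ρ) (j : Fin m) :
    partialDerivS m j (coeffT I a k α) s =
      (α j + 1) * coeffT I a (k + 1) (α + Pi.single j 1) s := by
  calc partialDerivS m j (coeffT I a k α) s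
      = (I k).coeff α fun t => partialDerivS m j (fun s' => a k (s', t)) s :=
        (I k).partialDerivS_coeff_slice (fun _ ht => ha.differentiableAt_slice_left k hs ht) α j
    _ = (I k).coeff α (partialDerivS m j
          (∑ β ∈ multiIdxLe m (k + 1), coeffT I a (k + 1) β s • cmonomial β)) :=
        (I k).coeff_congr (fun t ht => by
          rw [← ha.partialDerivS_succ k hs ht]
          exact (ha.eqOn_sum_coeffT I (k + 1) hs).partialDerivS isOpen_ball j ht) α
    _ = _ := (I k).coeff_partialDerivS_sum hα _ j

lemma differentiableOn_scaledCoeffT (ha : IsCascade ρ a) (i : ℕ) (γ : Fin m → ℕ) :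
    DifferentiableOn ℝ (scaledCoeffT I a i γ) (ball 0 ρ) := fun _ hs =>
  ((ha.differentiableAt_coeffT I _ γ hs).const_mul _).differentiableWithinAt

lemma partialDerivS_scaledCoeffT (ha : IsCascade ρ a) (i : ℕ) (γ : Fin m → ℕ) (j : Fin m) :
    Set.EqOn (partialDerivS m j (scaledCoeffT I a i γ))
      (scaledCoeffT I a i (γ + Pi.single j 1)) (ball 0 ρ) := fun s hs => by
  have hγ : γ ∈ multiIdxLe m (i + ∑ l, γ l) := mem_multiIdxLe.mpr (Nat.le_add_left _ _)
  unfold scaledCoeffT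
  rw [partialDerivS_const_mul (ha.differentiableAt_coeffT I _ γ hs),
    ha.partialDerivS_coeffT I hγ hs, sum_add_single, ← add_assoc,
    prod_factorial_add_single]
  push_cast
  ring

end IsCascade

end CoefficientsPolynomial

open CoefficientsPolynomial

theorem coefficients_polynomial_in_t_general (m : ℕ) (ρ : ℝ) (hρ : 0 < ρ)
    (a : ℕ → (Fin m → ℝ) × (Fin m → ℝ) → ℂ)
    (ha : ∀ k, ContDiffOn ℝ 1 (a k) (Metric.ball 0 ρ))
    (h0 : ∀ j : Fin m, ∀ p ∈ Metric.ball (0 : (Fin m → ℝ) × (Fin m → ℝ)) ρ,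
      fderiv ℝ (a 0) p (0, Pi.single j 1) = 0)
    (hrec : ∀ (k : ℕ) (j : Fin m),
      ∀ p ∈ Metric.ball (0 : (Fin m → ℝ) × (Fin m → ℝ)) ρ,
        fderiv ℝ (a (k + 1)) p (0, Pi.single j 1) =
          fderiv ℝ (a k) p (Pi.single j 1, 0)) :
    ∃ ρ' : ℝ, 0 < ρ' ∧
      ∃ b : ℕ → (Fin m → ℝ) → ℂ,
        (∀ k, ContDiffOn ℝ (⊤ : ℕ∞) (b k) (Metric.ball 0 ρ')) ∧
        ∀ (k : ℕ) (s t : Fin m → ℝ),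
          (s, t) ∈ Metric.ball (0 : (Fin m → ℝ) × (Fin m → ℝ)) ρ →
          s ∈ Metric.ball (0 : Fin m → ℝ) ρ' → t ∈ Metric.ball (0 : Fin m → ℝ) ρ' →
          a k (s, t) = ∑ α ∈ multiIdxLe m k,
            (((∏ j, (α j).factorial : ℕ) : ℂ))⁻¹ *
              (((∏ j, (t j) ^ (α j) : ℝ) : ℂ)) *
              multiDeriv m α (b (k - ∑ j, α j)) s := by
  have hcas : IsCascade ρ a := ⟨fun k => (ha k).differentiableOn one_ne_zero, h0, hrec⟩
  let I k : Interpolation m k (Metric.ball 0 ρ) := (Interpolation.nonempty_ball k hρ).some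
  refine ⟨ρ, hρ, fun i => scaledCoeffT I a i 0, fun i => ?_, fun k s t _ hs ht => ?_⟩
  · exact contDiffOn_of_partialDerivS_eqOn Metric.isOpen_ball
      (hcas.differentiableOn_scaledCoeffT I i)
      (fun γ j => ⟨_, hcas.partialDerivS_scaledCoeffT I i γ j⟩) 0
  refine (hcas.eqOn_sum_coeffT I k hs ht).trans ?_
  rw [Finset.sum_apply]
  refine Finset.sum_congr rfl fun α hα => ?_
  rw [multiDeriv_eqOn Metric.isOpen_ball (hcas.partialDerivS_scaledCoeffT I _) α hs, scaledCoeffT,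
    Nat.sub_add_cancel (mem_multiIdxLe.mp hα)]
  have hfact : ∏ j, ((α j).factorial : ℂ) ≠ 0 :=
    prod_ne_zero_iff.mpr fun j _ => Nat.cast_ne_zero.mpr (α j).factorial_ne_zero
  simp only [Pi.smul_apply, cmonomial, smul_eq_mul, Nat.cast_prod, Complex.ofReal_prod,
    Complex.ofReal_pow]
  field_simp

/-- Formula (2.3) of Eastwood–Graham with smoothness bootstrap: if `C^1`
functions `aₖ` on a ball `B` about the origin of `ℝ^m × ℝ^m` satisfy
`∂a₀/∂tⱼ = 0` and `∂aₖ/∂tⱼ = ∂aₖ₋₁/∂sⱼ` for `k ≥ 1`, then there are `C^∞`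
functions `bₖ` on a ball `B'` about the origin of `ℝ^m` with
`aₖ(s,t) = ∑_{|α| ≤ k} (1/α!) t^α ∂_s^α b_{k-|α|}(s)`; in particular each `aₖ`
is a polynomial in `t` of degree at most `k`. -/
theorem coefficients_polynomial_in_t (m : ℕ) (hm : 1 ≤ m) (ρ : ℝ) (hρ : 0 < ρ)
    (a : ℕ → (Fin m → ℝ) × (Fin m → ℝ) → ℂ)
    (ha : ∀ k, ContDiffOn ℝ 1 (a k) (Metric.ball 0 ρ))
    (h0 : ∀ j : Fin m, ∀ p ∈ Metric.ball (0 : (Fin m → ℝ) × (Fin m → ℝ)) ρ,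
      fderiv ℝ (a 0) p (0, Pi.single j 1) = 0)
    (hrec : ∀ (k : ℕ) (j : Fin m),
      ∀ p ∈ Metric.ball (0 : (Fin m → ℝ) × (Fin m → ℝ)) ρ,
        fderiv ℝ (a (k + 1)) p (0, Pi.single j 1) =
          fderiv ℝ (a k) p (Pi.single j 1, 0)) :
    ∃ ρ' : ℝ, 0 < ρ' ∧
      ∃ b : ℕ → (Fin m → ℝ) → ℂ,
        (∀ k, ContDiffOn ℝ (⊤ : ℕ∞) (b k) (Metric.ball 0 ρ')) ∧
        ∀ (k : ℕ) (s t : Fin m → ℝ),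
          (s, t) ∈ Metric.ball (0 : (Fin m → ℝ) × (Fin m → ℝ)) ρ →
          s ∈ Metric.ball (0 : Fin m → ℝ) ρ' → t ∈ Metric.ball (0 : Fin m → ℝ) ρ' →
          a k (s, t) = ∑ α ∈ multiIdxLe m k,
            (((∏ j, (α j).factorial : ℕ) : ℂ))⁻¹ *
              (((∏ j, (t j) ^ (α j) : ℝ) : ℂ)) *
              multiDeriv m α (b (k - ∑ j, α j)) s :=
  coefficients_polynomial_in_t_general m ρ hρ a ha h0 hrec
end
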